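/- arXiv:2004.12491 — 2 statements merged into one kernel-verified Lean document; each statement's English description precedes it below -/
import Mathlib

section
/- If X ~ BGamma(α,β,δ), then E[X] = (α/(βZ))·κ, where κ = 2 − 2(δ/β)(1+α) + (δ²/β²)(1+α)(2+α) and Z = 2 + (αδ/β)[(1+α)δ/β − 2]. -/
open MeasureTheory Real Set

noncomputable def Zc (α β δ : ℝ) : ℝ := 2 + (α * δ / β) * ((1 + α) * δ / β - 2)

noncomputable def bgammaPDF (α β δ x : ℝ) : ℝ :=
  (1 + (1 - δ * x) ^ 2) / Zc α β δ * (β ^ α / Real.Gamma α) * x ^ (α - 1) * Real.exp (-β * x)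

noncomputable def gammaPDF (α β x : ℝ) : ℝ :=
  β ^ α / Real.Gamma α * x ^ (α - 1) * Real.exp (-β * x)

/-!
The bimodal density is the gamma density times the quadratic weight `(1 + (1 - δx)²) / Z`, so
`x · f(x)` is a combination of `x`, `x²`, `x³` against the gamma density. The gamma moments are
`E[Xⁿ] = Γ(α + n) / (Γ(α) βⁿ)`, and `Γ(α + k + 1) = (α + k) Γ(α + k)` turns them into
`α/β`, `α(α+1)/β²`, `α(α+1)(α+2)/β³`, which assemble into `α κ / (β Z)`.
-/

lemma bgammaPDF_eq_mul_gammaPDF (α β δ x : ℝ) :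
    bgammaPDF α β δ x = (1 + (1 - δ * x) ^ 2) / Zc α β δ * gammaPDF α β x := by
  unfold bgammaPDF gammaPDF
  ring

section GammaMoments

variable {α β : ℝ}

lemma pow_mul_gammaPDF {x : ℝ} (hx : 0 < x) (n : ℕ) :
    x ^ n * gammaPDF α β x = β ^ α / Gamma α * (x ^ (α + n - 1) * exp (-(β * x))) := by
  rw [gammaPDF, show α + n - 1 = α - 1 + n by ring, rpow_add_natCast hx.ne', neg_mul]
  ring

lemma integrableOn_pow_mul_gammaPDF (hα : 0 < α) (hβ : 0 < β) (n : ℕ) :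
    IntegrableOn (fun x ↦ x ^ n * gammaPDF α β x) (Ioi 0) := by
  have hker := integrableOn_rpow_mul_exp_neg_mul_rpow (s := α + n - 1)
    (by linarith [n.cast_nonneg (α := ℝ)]) one_pos hβ
  simp only [rpow_one, neg_mul] at hker
  exact IntegrableOn.congr_fun (hker.const_mul _) (fun x hx ↦ (pow_mul_gammaPDF hx n).symm)
    measurableSet_Ioi

lemma integral_pow_mul_gammaPDF (hα : 0 < α) (hβ : 0 < β) (n : ℕ) :
    ∫ x in Ioi 0, x ^ n * gammaPDF α β x = Gamma (α + n) / (Gamma α * β ^ n) := by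
  rw [setIntegral_congr_fun measurableSet_Ioi (fun x hx ↦ pow_mul_gammaPDF hx n),
    integral_const_mul, integral_rpow_mul_exp_neg_mul_Ioi (by positivity) hβ, one_div,
    inv_rpow hβ.le, rpow_add_natCast hβ.ne']
  have := (rpow_pos_of_pos hβ α).ne'
  field_simp

end GammaMoments

theorem bgamma_mean (α β δ : ℝ) (hα : 0 < α) (hβ : 0 < β) :
    ∫ x in Ioi (0:ℝ), x * bgammaPDF α β δ x =
      α / (β * Zc α β δ) *
        (2 - 2 * (δ / β) * (1 + α) + (δ / β) ^ 2 * (1 + α) * (2 + α)) := by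
  have hint := integrableOn_pow_mul_gammaPDF hα hβ
  have hweight : ∀ x, x * bgammaPDF α β δ x =
      (2 * (x ^ 1 * gammaPDF α β x) - 2 * δ * (x ^ 2 * gammaPDF α β x) +
        δ ^ 2 * (x ^ 3 * gammaPDF α β x)) / Zc α β δ := by
    intro x
    rw [bgammaPDF_eq_mul_gammaPDF]
    ring
  have hΓ (k : ℕ) : Gamma (α + ↑(k + 1)) = (α + k) * Gamma (α + k) := by
    rw [Nat.cast_succ, ← add_assoc, Gamma_add_one (by positivity)]
  have hint12 : IntegrableOn
      (fun x ↦ 2 * (x ^ 1 * gammaPDF α β x) - 2 * δ * (x ^ 2 * gammaPDF α β x)) (Ioi 0) :=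
    ((hint 1).const_mul _).sub ((hint 2).const_mul _)
  simp_rw [hweight]
  rw [integral_div, integral_add hint12 ((hint 3).const_mul _),
    integral_sub ((hint 1).const_mul _) ((hint 2).const_mul _),
    integral_const_mul, integral_const_mul, integral_const_mul,
    integral_pow_mul_gammaPDF hα hβ, integral_pow_mul_gammaPDF hα hβ,
    integral_pow_mul_gammaPDF hα hβ]
  rw [hΓ 2, hΓ 1, hΓ 0]
  push_cast [add_zero]
  have := (Gamma_pos_of_pos hα).ne'
  field_simp
  ring
end

section
/- If X ~ BGamma(α,β,δ), then for t ≥ 0 the survival function satisfies R(t;α,β,δ) = {(δt/β)[δ(t+(α+1)/β) − 2]/Z}·f₀(t) + R₀(t), where f₀ and R₀ are the Gamma(α,β) density and survival function and Z = 2 + (αδ/β)[(1+α)δ/β − 2]. -/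
open MeasureTheory Real Set

/-!
With `K = β^α / Γ(α) / Z`, the difference of the two densities is
`K (2 - Z - 2δx + δ²x²) x^(α-1) e^(-βx)`, and the constant `Z` is exactly what makes this the
derivative of `(a + b x) x^α e^(-βx)` for suitable `a`, `b`. That primitive vanishes at infinity,
so the tail integral of the difference is the boundary term at `t`, which is a multiple of the
Gamma density `f₀(t)`.
-/

open Filter Topology

lemma Zc_pos {α : ℝ} (hα : 0 ≤ α) (β δ : ℝ) : 0 < Zc α β δ := by
  have key : (1 + α) * Zc α β δ = α * ((1 + α) * (δ / β) - 1) ^ 2 + α + 2 := by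
    simp only [Zc, mul_div_assoc]
    ring
  nlinarith [mul_nonneg hα (sq_nonneg ((1 + α) * (δ / β) - 1))]

lemma integrableOn_rpow_mul_exp_neg_mul_Ioi {β s t : ℝ} (hβ : 0 < β) (hs : -1 < s)
    (ht : 0 ≤ t) : IntegrableOn (fun x : ℝ => x ^ s * exp (-β * x)) (Ioi t) := by
  have h := integrableOn_rpow_mul_exp_neg_mul_rpow hs zero_lt_one hβ
  simp only [rpow_one] at h
  exact h.mono_set (Ioi_subset_Ioi ht)

lemma integrableOn_quadratic_mul_rpow_mul_exp_neg_mul_Ioi {α β t : ℝ} (c₀ c₁ c₂ : ℝ)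
    (hα : 0 < α) (hβ : 0 < β) (ht : 0 ≤ t) :
    IntegrableOn (fun x : ℝ => (c₀ + c₁ * x + c₂ * x ^ 2) * x ^ (α - 1) * exp (-β * x))
      (Ioi t) := by
  have hint : ∀ k : ℕ, IntegrableOn (fun x : ℝ => x ^ (α - 1 + k) * exp (-β * x)) (Ioi t) :=
    fun k => integrableOn_rpow_mul_exp_neg_mul_Ioi hβ (by linarith [k.cast_nonneg (α := ℝ)]) ht
  refine IntegrableOn.congr_fun ((((hint 0).const_mul c₀).add ((hint 1).const_mul c₁)).add
    ((hint 2).const_mul c₂)) (fun x hx => ?_) measurableSet_Ioi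
  have hx : x ≠ 0 := (ht.trans_lt hx).ne'
  simp only [Pi.add_apply, rpow_add_natCast hx]
  ring

lemma hasDerivAt_affine_mul_rpow_mul_exp_neg_mul (a b α β : ℝ) {x : ℝ} (hx : x ≠ 0) :
    HasDerivAt (fun x : ℝ => (a + b * x) * x ^ α * exp (-β * x))
      ((α * a + (b * (α + 1) - β * a) * x + -β * b * x ^ 2) * x ^ (α - 1) * exp (-β * x)) x := by
  have hpow : x ^ α = x ^ (α - 1) * x := by
    rw [← rpow_add_one hx]; ring_nf
  have hexp : HasDerivAt (fun x : ℝ => exp (-β * x)) (exp (-β * x) * -β) x :=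
    ((hasDerivAt_id x).const_mul (-β)).exp.congr_deriv (by simp)
  refine ((((hasDerivAt_id x).const_mul b).const_add a).mul
    (hasDerivAt_rpow_const (p := α) (Or.inl hx))).mul hexp |>.congr_deriv ?_
  simp only [id, Pi.mul_apply, hpow]
  ring

lemma tendsto_affine_mul_rpow_mul_exp_neg_mul_atTop (a b α : ℝ) {β : ℝ} (hβ : 0 < β) :
    Tendsto (fun x : ℝ => (a + b * x) * x ^ α * exp (-β * x)) atTop (𝓝 0) := by
  have h := ((tendsto_rpow_mul_exp_neg_mul_atTop_nhds_zero α β hβ).const_mul a).add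
    ((tendsto_rpow_mul_exp_neg_mul_atTop_nhds_zero (α + 1) β hβ).const_mul b)
  rw [mul_zero, mul_zero, add_zero] at h
  refine h.congr' ?_
  filter_upwards [eventually_gt_atTop 0] with x hx
  rw [rpow_add_one hx.ne']
  ring

lemma integral_Ioi_quadratic_mul_rpow_mul_exp_neg_mul (a b : ℝ) {α β t : ℝ} (hα : 0 < α)
    (hβ : 0 < β) (ht : 0 ≤ t) :
    ∫ x in Ioi t, (α * a + (b * (α + 1) - β * a) * x + -β * b * x ^ 2) * x ^ (α - 1)
        * exp (-β * x) = -((a + b * t) * t ^ α * exp (-β * t)) := by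
  have hcont : ContinuousWithinAt (fun x : ℝ => (a + b * x) * x ^ α * exp (-β * x)) (Ici t) t :=
    (by fun_prop (disch := exact Or.inr hα.le) :
      ContinuousAt (fun x : ℝ => (a + b * x) * x ^ α * exp (-β * x)) t).continuousWithinAt
  rw [integral_Ioi_of_hasDerivAt_of_tendsto hcont
    (fun x hx => hasDerivAt_affine_mul_rpow_mul_exp_neg_mul a b α β (ht.trans_lt hx).ne')
    (integrableOn_quadratic_mul_rpow_mul_exp_neg_mul_Ioi _ _ _ hα hβ ht)
    (tendsto_affine_mul_rpow_mul_exp_neg_mul_atTop a b α hβ), zero_sub]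

lemma bgammaPDF_eq_gammaPDF_add {α β δ : ℝ} (hZ : Zc α β δ ≠ 0) (x : ℝ) :
    bgammaPDF α β δ x = gammaPDF α β x + β ^ α / Gamma α / Zc α β δ
      * (2 - Zc α β δ - 2 * δ * x + δ ^ 2 * x ^ 2) * x ^ (α - 1) * exp (-β * x) := by
  simp only [bgammaPDF, gammaPDF]
  field_simp
  ring

theorem bgamma_survival (α β δ t : ℝ) (hα : 0 < α) (hβ : 0 < β) (ht : 0 ≤ t) :
    ∫ x in Ioi t, bgammaPDF α β δ x =
      (δ * t / β) * (δ * (t + (α + 1) / β) - 2) / Zc α β δ * gammaPDF α β t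
        + ∫ x in Ioi t, gammaPDF α β x := by
  have hZ : Zc α β δ ≠ 0 := (Zc_pos hα.le β δ).ne'
  simp only [bgammaPDF_eq_gammaPDF_add hZ]
  set K := β ^ α / Gamma α / Zc α β δ
  set a := -(K * (δ / β) * (δ * (α + 1) / β - 2))
  set b := -(K * δ ^ 2 / β)
  have hcoeff : ∀ x : ℝ, K * (2 - Zc α β δ - 2 * δ * x + δ ^ 2 * x ^ 2) =
      α * a + (b * (α + 1) - β * a) * x + -β * b * x ^ 2 := by
    intro x
    simp only [a, b, Zc]
    field_simp
    ring
  have hgamma : IntegrableOn (gammaPDF α β) (Ioi t) :=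
    IntegrableOn.congr_fun ((integrableOn_rpow_mul_exp_neg_mul_Ioi (s := α - 1) hβ
      (by linarith) ht).const_mul (β ^ α / Gamma α)) (fun x _ => (mul_assoc _ _ _).symm)
      measurableSet_Ioi
  have htpow : t ^ α = t * t ^ (α - 1) := by
    rw [← rpow_one_add' ht (by simpa using hα.ne')]; ring_nf
  simp only [hcoeff]
  rw [integral_add hgamma (integrableOn_quadratic_mul_rpow_mul_exp_neg_mul_Ioi _ _ _ hα hβ ht),
    integral_Ioi_quadratic_mul_rpow_mul_exp_neg_mul a b hα hβ ht, add_comm]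
  congr 1
  simp only [a, b, K, gammaPDF, htpow]
  field_simp
  ring
end
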